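/- arXiv:2211.04357 — 2 statements merged into one kernel-verified Lean document; each statement's English description precedes it below -/
import Mathlib

section
/- If G is a connected twin-free graph on n vertices with imax(G) = k where k ≥ 2, then n ≤ 2^{k-1} + k - 2. -/
open SimpleGraph

/-- `s` is an independent set in `G`. -/
def IsIndep {V : Type*} (G : SimpleGraph V) (s : Set V) : Prop :=
  ∀ ⦃u⦄, u ∈ s → ∀ ⦃v⦄, v ∈ s → ¬ G.Adj u v

/-- `s` is a maximal independent set in `G`. -/
def IsMaxIndep {V : Type*} (G : SimpleGraph V) (s : Set V) : Prop :=
  IsIndep G s ∧ ∀ t : Set V, IsIndep G t → s ⊆ t → s = t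

/-- The number of maximal independent sets of `G`. -/
noncomputable def imax {V : Type*} (G : SimpleGraph V) : ℕ :=
  Set.ncard {s : Set V | IsMaxIndep G s}

/-- `G` is twin-free: no two distinct vertices have the same open neighbourhood. -/
def TwinFree {V : Type*} (G : SimpleGraph V) : Prop :=
  ∀ u v : V, G.neighborSet u = G.neighborSet v → u = v

/-!
Sending a vertex `v` to the set of maximal independent sets containing it embeds `G` (injectively,
by twin-freeness) as a family `S` of nonempty proper subsets of a `k`-set (proper, since `G` is
connected with an edge) with the Helly property: members meeting pairwise come from pairwise
nonadjacent vertices, and a maximal independent set containing all of them is a common point.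

For such a family fix a point `a`. Pairing each set with its complement, `S` has at most
`2^(k-1) - 1 + #R` members, where `R` consists of the members `X ∌ a` with `Xᶜ ∈ S`. By Helly
applied to `X` and the complements of the other members of `R` no larger than `X`, each `X ∈ R`
has a point lying in none of them; this point differs from `a` and determines `X`, so `#R ≤ k - 1`.
-/

open Finset

section HellyFamily

variable {β : Type*} [Fintype β] [DecidableEq β]

def IsHellyFamily (S : Finset (Finset β)) : Prop :=
  ∀ 𝒢 ⊆ S, (∀ X ∈ 𝒢, ∀ Y ∈ 𝒢, (X ∩ Y).Nonempty) → ∃ c, ∀ X ∈ 𝒢, c ∈ X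

-- Each complementary pair inside `S` is represented by its side avoiding `a`.
def complPairReps (S : Finset (Finset β)) (a : β) : Finset (Finset β) :=
  S.filter fun X => Xᶜ ∈ S ∧ a ∉ X

variable {S : Finset (Finset β)} {a : β}

-- `X ↦` whichever of `X`, `Xᶜ` avoids `a` is at most two-to-one on `S`, and two-to-one exactly
-- over `complPairReps S a`.
theorem card_le_of_nonempty_of_ne_univ (hS : ∀ X ∈ S, X.Nonempty ∧ X ≠ univ) :
    #S ≤ 2 ^ (Fintype.card β - 1) - 1 + #(complPairReps S a) := by
  set A := S.filter (a ∉ ·)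
  set B := (S.filter (a ∈ ·)).image compl
  have mem_B : ∀ X, X ∈ B ↔ Xᶜ ∈ S ∧ a ∉ X := by
    intro X
    simp only [B, mem_image, mem_filter]
    constructor
    · rintro ⟨Y, ⟨hY, haY⟩, rfl⟩
      simpa [compl_compl] using ⟨hY, haY⟩
    · exact fun ⟨hX, haX⟩ => ⟨Xᶜ, ⟨hX, by simpa using haX⟩, compl_compl X⟩
  have hS_split : #(S.filter (a ∈ ·)) + #A = #S := card_filter_add_card_filter_not _
  have hB : #B = #(S.filter (a ∈ ·)) := card_image_of_injective _ compl_injective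
  have hAB : A ∩ B = complPairReps S a := by
    ext X
    simp only [A, complPairReps, mem_inter, mem_filter, mem_B]
    tauto
  have hAB_sub : A ∪ B ⊆ ((univ.erase a).powerset).erase ∅ := by
    intro X hX
    simp only [mem_union, mem_filter, mem_B, A] at hX
    refine mem_erase.2 ⟨?_, mem_powerset.2 fun x hx => mem_erase.2 ⟨?_, mem_univ x⟩⟩
    · rcases hX with ⟨hX, -⟩ | ⟨hX, -⟩
      · exact (hS X hX).1.ne_empty
      · rintro rfl
        exact (hS _ hX).2 compl_empty
    · rintro rfl
      rcases hX with ⟨-, h⟩ | ⟨-, h⟩ <;> exact h hx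
  have hcard : #(((univ.erase a).powerset).erase ∅) = 2 ^ (Fintype.card β - 1) - 1 := by
    rw [card_erase_of_mem (empty_mem_powerset _), card_powerset, card_erase_of_mem (mem_univ a),
      card_univ]
  calc #S = #A + #B := by rw [hB, ← hS_split, add_comm]
    _ = #(A ∪ B) + #(complPairReps S a) := by rw [← hAB, card_union_add_card_inter]
    _ ≤ 2 ^ (Fintype.card β - 1) - 1 + #(complPairReps S a) := by
      gcongr
      exact (card_le_card hAB_sub).trans_eq hcard

theorem IsHellyFamily.exists_mem_forall_not_mem (hS : IsHellyFamily S)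
    (hne : ∀ X ∈ S, X.Nonempty) {X : Finset β} (hX : X ∈ complPairReps S a) :
    ∃ c ∈ X, ∀ Y ∈ complPairReps S a, Y ≠ X → #Y ≤ #X → c ∉ Y := by
  set R := complPairReps S a
  have mem_R : ∀ {Y}, Y ∈ R → Y ∈ S ∧ Yᶜ ∈ S ∧ a ∉ Y := fun hY => by
    simpa only [R, complPairReps, mem_filter] using hY
  set 𝒢 := insert X ((R.filter fun Y => Y ≠ X ∧ #Y ≤ #X).image compl)
  have mem_𝒢 : ∀ {Z}, Z ∈ 𝒢 → Z = X ∨ ∃ Y ∈ R, (Y ≠ X ∧ #Y ≤ #X) ∧ Yᶜ = Z := fun hZ => by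
    simpa only [𝒢, mem_insert, mem_image, mem_filter, and_assoc] using hZ
  have h𝒢S : 𝒢 ⊆ S := by
    intro Z hZ
    obtain rfl | ⟨Y, hY, -, rfl⟩ := mem_𝒢 hZ
    · exact (mem_R hX).1
    · exact (mem_R hY).2.1
  have hX_inter : ∀ Y ∈ R, Y ≠ X ∧ #Y ≤ #X → (X ∩ Yᶜ).Nonempty := by
    rintro Y - ⟨hYX, hcard⟩
    by_contra h
    rw [not_nonempty_iff_eq_empty, ← disjoint_iff_inter_eq_empty, disjoint_compl_right_iff] at h
    exact hYX (eq_of_subset_of_card_le h hcard).symm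
  obtain ⟨c, hc⟩ := hS 𝒢 h𝒢S <| by
    intro Z hZ Z' hZ'
    obtain rfl | ⟨Y, hY, hYX, rfl⟩ := mem_𝒢 hZ <;> obtain rfl | ⟨Y', hY', hY'X, rfl⟩ := mem_𝒢 hZ'
    · simpa only [inter_self] using hne _ (mem_R hX).1
    · exact hX_inter Y' hY' hY'X
    · exact inter_comm Z' _ ▸ hX_inter Y hY hYX
    · exact ⟨a, mem_inter.2 ⟨mem_compl.2 (mem_R hY).2.2, mem_compl.2 (mem_R hY').2.2⟩⟩
  refine ⟨c, hc X (mem_insert_self _ _), fun Y hY hYX hcard => ?_⟩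
  exact mem_compl.1 <| hc _ <| mem_insert_of_mem <| mem_image_of_mem _ <|
    mem_filter.2 ⟨hY, hYX, hcard⟩

theorem IsHellyFamily.card_complPairReps_le (hS : IsHellyFamily S) (hne : ∀ X ∈ S, X.Nonempty)
    (a : β) : #(complPairReps S a) ≤ Fintype.card β - 1 := by
  have : Nonempty β := ⟨a⟩
  choose! c hcX hc using fun X (hX : X ∈ complPairReps S a) => hS.exists_mem_forall_not_mem hne hX
  rw [← card_univ, ← card_erase_of_mem (mem_univ a)]
  refine card_le_card_of_injOn c (fun X hX => mem_erase.2 ⟨?_, mem_univ _⟩) fun X hX Y hY hXY => ?_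
  · intro h
    exact (mem_filter.1 hX).2.2 (h ▸ hcX X hX)
  · by_contra hne
    rcases le_total #Y #X with h | h
    · exact hc X hX Y hY (Ne.symm hne) h (hXY ▸ hcX Y hY)
    · exact hc Y hY X hX hne h (hXY.symm ▸ hcX X hX)

theorem IsHellyFamily.card_le [Nonempty β] (hS : IsHellyFamily S)
    (hproper : ∀ X ∈ S, X.Nonempty ∧ X ≠ univ) :
    #S ≤ 2 ^ (Fintype.card β - 1) + Fintype.card β - 2 := by
  obtain ⟨a⟩ := ‹Nonempty β›
  have h₁ := card_le_of_nonempty_of_ne_univ (a := a) hproper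
  have h₂ := hS.card_complPairReps_le (fun X hX => (hproper X hX).1) a
  have := Fintype.card_pos (α := β)
  have := Nat.one_le_two_pow (n := Fintype.card β - 1)
  omega

end HellyFamily

section MaximalIndependentSets

variable {V : Type*} {G : SimpleGraph V}

theorem isIndep_pair {u v : V} (h : ¬ G.Adj u v) : IsIndep G {u, v} := by
  rintro x (rfl | rfl) y (rfl | rfl)
  exacts [G.irrefl, h, fun h' => h h'.symm, G.irrefl]

theorem IsIndep.exists_isMaxIndep_superset [Finite V] {s : Set V} (hs : IsIndep G s) :
    ∃ t, IsMaxIndep G t ∧ s ⊆ t := by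
  obtain ⟨t, ⟨ht, hst⟩, hmax⟩ := Set.Finite.exists_maximalFor id {t : Set V | IsIndep G t ∧ s ⊆ t}
    (Set.toFinite _) ⟨s, hs, subset_rfl⟩
  exact ⟨t, ⟨ht, fun t' ht' htt' => htt'.antisymm (hmax ⟨ht', hst.trans htt'⟩ htt')⟩, hst⟩

theorem exists_isMaxIndep_mem_mem [Finite V] {u v : V} (h : ¬ G.Adj u v) :
    ∃ t, IsMaxIndep G t ∧ u ∈ t ∧ v ∈ t := by
  obtain ⟨t, ht, hsub⟩ := (isIndep_pair h).exists_isMaxIndep_superset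
  exact ⟨t, ht, hsub (.inl rfl), hsub (.inr rfl)⟩

theorem nontrivial_of_one_lt_imax (h : 1 < imax G) : Nontrivial V := by
  by_contra hV
  rw [not_nontrivial_iff_subsingleton] at hV
  have hsub : {s | IsMaxIndep G s} ⊆ {Set.univ} := fun s hs =>
    hs.2 _ (fun u _ v _ huv => huv.ne (Subsingleton.elim u v)) (Set.subset_univ s)
  have := Set.ncard_le_ncard hsub
  rw [Set.ncard_singleton] at this
  exact (h.trans_le this).false

abbrev MaxIndepSet (G : SimpleGraph V) : Type _ := {s : Set V // IsMaxIndep G s}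

open Classical in
noncomputable def maxIndepSetsContaining (G : SimpleGraph V) [Fintype (MaxIndepSet G)] (v : V) :
    Finset (MaxIndepSet G) :=
  univ.filter fun s => v ∈ s.1

variable [Fintype (MaxIndepSet G)]

theorem mem_maxIndepSetsContaining {v : V} {s : MaxIndepSet G} :
    s ∈ maxIndepSetsContaining G v ↔ v ∈ s.1 := by
  simp [maxIndepSetsContaining]

variable [Fintype V]

theorem maxIndepSetsContaining_nonempty (v : V) : (maxIndepSetsContaining G v).Nonempty := by
  obtain ⟨t, ht, hv, -⟩ := exists_isMaxIndep_mem_mem (G.irrefl (v := v))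
  exact ⟨⟨t, ht⟩, mem_maxIndepSetsContaining.2 hv⟩

theorem maxIndepSetsContaining_ne_univ {v w : V} (h : G.Adj v w) :
    maxIndepSetsContaining G v ≠ univ := by
  obtain ⟨t, ht, hw, -⟩ := exists_isMaxIndep_mem_mem (G.irrefl (v := w))
  intro huniv
  have hv : v ∈ t := mem_maxIndepSetsContaining.1 (huniv ▸ mem_univ (⟨t, ht⟩ : MaxIndepSet G))
  exact ht.1 hv hw h

theorem neighborSet_subset_of_maxIndepSetsContaining_subset {u v : V}
    (h : maxIndepSetsContaining G u ⊆ maxIndepSetsContaining G v) :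
    G.neighborSet v ⊆ G.neighborSet u := by
  intro w hvw
  by_contra huw
  obtain ⟨t, ht, hu, hw⟩ := exists_isMaxIndep_mem_mem huw
  have hv : v ∈ t :=
    mem_maxIndepSetsContaining.1 (h (mem_maxIndepSetsContaining (s := ⟨t, ht⟩) |>.2 hu))
  exact ht.1 hv hw hvw

theorem maxIndepSetsContaining_injective (htf : TwinFree G) :
    Function.Injective (maxIndepSetsContaining G) := fun u v h =>
  htf u v <| (neighborSet_subset_of_maxIndepSetsContaining_subset h.ge).antisymm
    (neighborSet_subset_of_maxIndepSetsContaining_subset h.le)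

theorem isHellyFamily_maxIndepSetsContaining [DecidableEq (MaxIndepSet G)] :
    IsHellyFamily (univ.image (maxIndepSetsContaining G)) := by
  intro 𝒢 h𝒢 hpair
  have hW : IsIndep G {v | maxIndepSetsContaining G v ∈ 𝒢} := by
    intro u hu v hv
    obtain ⟨s, hs⟩ := hpair _ hu _ hv
    rw [mem_inter, mem_maxIndepSetsContaining, mem_maxIndepSetsContaining] at hs
    exact s.2.1 hs.1 hs.2
  obtain ⟨t, ht, hsub⟩ := hW.exists_isMaxIndep_superset
  refine ⟨⟨t, ht⟩, fun X hX => ?_⟩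
  obtain ⟨v, -, rfl⟩ := mem_image.1 (h𝒢 hX)
  exact mem_maxIndepSetsContaining.2 (hsub hX)

end MaximalIndependentSets

theorem stmt_4 {V : Type*} [Fintype V] (G : SimpleGraph V) (k : ℕ) (hk : 2 ≤ k)
    (hconn : G.Connected) (htf : TwinFree G) (himax : imax G = k) :
    Fintype.card V ≤ 2 ^ (k - 1) + k - 2 := by
  classical
  have hcard : Fintype.card (MaxIndepSet G) = k := by
    rw [← himax, imax, ← Nat.card_coe_set_eq, Nat.card_eq_fintype_card]
    rfl
  have : Nonempty (MaxIndepSet G) := Fintype.card_pos_iff.1 (by omega)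
  have : Nontrivial V := nontrivial_of_one_lt_imax (G := G) (by omega)
  have hbound := (isHellyFamily_maxIndepSetsContaining (G := G)).card_le fun X hX => by
    obtain ⟨v, -, rfl⟩ := mem_image.1 hX
    obtain ⟨w, hvw⟩ := hconn.preconnected.exists_adj_of_nontrivial v
    exact ⟨maxIndepSetsContaining_nonempty v, maxIndepSetsContaining_ne_univ hvw⟩
  rwa [card_image_of_injective _ (maxIndepSetsContaining_injective htf), card_univ, hcard] at hbound
end

section
/- For every graph G without isolated vertices, imax(G) ≥ 2^{ν(G)}, where ν(G) is the size of a maximum induced matching in G. -/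
open SimpleGraph

/-- `M` is an induced matching of `G`: a set of edges (given as ordered pairs) whose
endpoints are pairwise distinct and induce no edges other than the matching edges. -/
def IsInducedMatching {V : Type*} (G : SimpleGraph V) (M : Finset (V × V)) : Prop :=
  (∀ p ∈ M, G.Adj p.1 p.2) ∧
  ∀ p ∈ M, ∀ q ∈ M, p ≠ q →
    p.1 ≠ q.1 ∧ p.1 ≠ q.2 ∧ p.2 ≠ q.1 ∧ p.2 ≠ q.2 ∧
    ¬ G.Adj p.1 q.1 ∧ ¬ G.Adj p.1 q.2 ∧ ¬ G.Adj p.2 q.1 ∧ ¬ G.Adj p.2 q.2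

/-- The maximum size of an induced matching of `G`. -/
noncomputable def inducedMatchingNum {V : Type*} (G : SimpleGraph V) : ℕ :=
  sSup {k : ℕ | ∃ M : Finset (V × V), IsInducedMatching G M ∧ M.card = k}

/-- Every independent set extends to a maximal independent set. -/
lemma exists_maxIndep_superset {V : Type*} (G : SimpleGraph V) (s : Set V)
    (hs : IsIndep G s) : ∃ t : Set V, s ⊆ t ∧ IsMaxIndep G t := by
  obtain ⟨m, hsm, hm⟩ := zorn_subset_nonempty {t : Set V | IsIndep G t}
    (fun c hcS hchain hcne => by
      refine ⟨⋃₀ c, ?_, fun t ht => Set.subset_sUnion_of_mem ht⟩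
      intro u hu v hv hadj
      obtain ⟨a, hac, hua⟩ := hu
      obtain ⟨b, hbc, hvb⟩ := hv
      rcases hchain.total hac hbc with h | h
      · exact hcS hbc (h hua) hvb hadj
      · exact hcS hac hua (h hvb) hadj) s hs
  exact ⟨m, hsm, hm.prop, fun t ht hmt => (hm.eq_of_le ht hmt).symm ▸ rfl⟩

theorem stmt_17 {V : Type*} [Fintype V] (G : SimpleGraph V)
    (hnoiso : ∀ v : V, ∃ u : V, G.Adj v u) :
    2 ^ inducedMatchingNum G ≤ imax G := by
  classical
  -- obtain a maximum induced matching M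
  obtain ⟨M, hM, hMcard⟩ : ∃ M : Finset (V × V),
      IsInducedMatching G M ∧ M.card = inducedMatchingNum G := by
    have h0 : (0 : ℕ) ∈ {k : ℕ | ∃ M : Finset (V × V), IsInducedMatching G M ∧ M.card = k} :=
      ⟨∅, ⟨fun p hp => absurd hp (Finset.notMem_empty p),
        fun p hp => absurd hp (Finset.notMem_empty p)⟩, rfl⟩
    have hbdd : BddAbove {k : ℕ | ∃ M : Finset (V × V), IsInducedMatching G M ∧ M.card = k} :=
      ⟨Fintype.card (V × V), fun k ⟨M, _, hk⟩ => hk ▸ Finset.card_le_univ M⟩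
    exact Nat.sSup_mem ⟨0, h0⟩ hbdd
  -- the base independent set for a subset S of M
  set B : Finset (V × V) → Set V :=
    fun S => {v | ∃ p ∈ M, (p ∈ S ∧ v = p.1) ∨ (p ∉ S ∧ v = p.2)} with hB
  have hBind : ∀ S : Finset (V × V), IsIndep G (B S) := by
    intro S u hu v hv hadj
    obtain ⟨p, hpM, hp⟩ := hu
    obtain ⟨q, hqM, hq⟩ := hv
    by_cases hpq : p = q
    · subst hpq
      rcases hp with ⟨hpS, rfl⟩ | ⟨hpS, rfl⟩ <;>
        rcases hq with ⟨hqS, rfl⟩ | ⟨hqS, rfl⟩ <;>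
        first
          | exact G.irrefl hadj
          | exact hpS hqS
          | exact hqS hpS
    · obtain ⟨_, _, _, _, h1, h2, h3, h4⟩ := hM.2 p hpM q hqM hpq
      rcases hp with ⟨_, rfl⟩ | ⟨_, rfl⟩ <;> rcases hq with ⟨_, rfl⟩ | ⟨_, rfl⟩
      exacts [h1 hadj, h2 hadj, h3 hadj, h4 hadj]
  -- extend each base set to a maximal independent set
  have hex : ∀ S : Finset (V × V), ∃ t : Set V, B S ⊆ t ∧ IsMaxIndep G t :=
    fun S => exists_maxIndep_superset G (B S) (hBind S)
  choose f hf1 hf2 using hex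
  -- membership criterion
  have hkey : ∀ S : Finset (V × V), ∀ p ∈ M, (p ∈ S ↔ p.1 ∈ f S) := by
    intro S p hpM
    constructor
    · intro hpS
      exact hf1 S ⟨p, hpM, Or.inl ⟨hpS, rfl⟩⟩
    · intro h1
      by_contra hpS
      have h2 : p.2 ∈ f S := hf1 S ⟨p, hpM, Or.inr ⟨hpS, rfl⟩⟩
      exact (hf2 S).1 h1 h2 (hM.1 p hpM)
  -- count
  have hfin : {s : Set V | IsMaxIndep G s}.Finite := Set.toFinite _
  have himax : imax G = hfin.toFinset.card := by
    rw [imax, Set.ncard_eq_toFinset_card']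
    congr 1
    simp [Set.Finite.toFinset]
  calc 2 ^ inducedMatchingNum G = M.powerset.card := by
        rw [Finset.card_powerset, hMcard]
    _ ≤ hfin.toFinset.card := by
        apply Finset.card_le_card_of_injOn f
        · intro S _
          simpa using hf2 S
        · intro S hS T hT hST
          simp only [Finset.coe_powerset, Set.mem_preimage, Finset.mem_coe,
            Set.mem_powerset_iff, Finset.coe_subset] at hS hT
          ext p
          by_cases hpM : p ∈ M
          · rw [hkey S p hpM, hkey T p hpM, hST]
          · exact iff_of_false (fun h => hpM (hS h)) (fun h => hpM (hT h))
    _ = imax G := himax.symm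
end
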